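/- Let n ≥ 2, β ≥ 0, d ≥ n, and let x_1(0),...,x_n(0) ∈ S^{d-1} be pairwise orthogonal. For the solution of the self-attention dynamics ẋ_i = P^⊥_{x_i}((1/Z_{β,i}) Σ_j e^{β⟨x_i,x_j⟩} x_j), the inner product ⟨x_i(t), x_j(t)⟩ is the same for all pairs of distinct indices i ≠ j and all t ≥ 0. -/

import Mathlib

open Set
open scoped RealInnerProductSpace

/-- The self-attention vector field on the sphere. -/
noncomputable def SAfield {d n : ℕ} (β : ℝ) (x : Fin n → EuclideanSpace ℝ (Fin d))
    (i : Fin n) : EuclideanSpace ℝ (Fin d) :=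
  let v := (∑ k, Real.exp (β * ⟪x i, x k⟫))⁻¹ •
      ∑ j, Real.exp (β * ⟪x i, x j⟫) • x j
  v - ⟪x i, v⟫ • x i

/-!
The dynamics is equivariant under relabelling the particles and under orthogonal maps of `ℝ^d`.
Given distinct pairs `(k, l)` and `(i, j)`, choose a permutation `σ` with `σ k = i`, `σ l = j`,
and, since both `(x_p(0))_p` and `(x_{σ p}(0))_p` are orthonormal, an orthogonal map `U` with
`U x_p(0) = x_{σ p}(0)`. Then `t ↦ (U x_p(t))_p` and `t ↦ (x_{σ p}(t))_p` solve the same ODE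
with the same initial data; the vector field is smooth, hence locally Lipschitz, so they coincide,
and `⟪x_i, x_j⟫ = ⟪U x_k, U x_l⟫ = ⟪x_k, x_l⟫`.
-/

theorem Orthonormal.exists_linearIsometryEquiv_apply_eq {𝕜 E ι : Type*} [RCLike 𝕜]
    [NormedAddCommGroup E] [InnerProductSpace 𝕜 E] [FiniteDimensional 𝕜 E]
    {v w : ι → E} (hv : Orthonormal 𝕜 v) (hw : Orthonormal 𝕜 w) :
    ∃ U : E ≃ₗᵢ[𝕜] E, ∀ i, U (v i) = w i := by
  let bv := Module.Basis.span hv.linearIndependent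
  let bw := Module.Basis.span hw.linearIndependent
  have hbv : Orthonormal 𝕜 bv := by
    convert orthonormal_span hv using 1; ext i; simp [bv]
  have hbw : Orthonormal 𝕜 bw := by
    convert orthonormal_span hw using 1; ext i; simp [bw]
  let L := (Submodule.subtypeₗᵢ _).comp (hbv.equiv hbw (Equiv.refl ι)).toLinearIsometry
  refine ⟨L.extend.toLinearIsometryEquiv rfl, fun i => ?_⟩
  have hL := L.extend_apply (bv i)
  rw [show ((bv i : _) : E) = v i by simp [bv]] at hL
  rw [LinearIsometry.toLinearIsometryEquiv_apply, hL]
  simp [L, bw]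

theorem ODE_solution_unique_Ici_of_locallyLipschitz {E : Type*} [NormedAddCommGroup E]
    [NormedSpace ℝ E] {F : E → E} (hF : LocallyLipschitz F) {f g : ℝ → E}
    (hf : ∀ t ∈ Ici (0 : ℝ), HasDerivAt f (F (f t)) t)
    (hg : ∀ t ∈ Ici (0 : ℝ), HasDerivAt g (F (g t)) t) (h0 : f 0 = g 0) :
    EqOn f g (Ici 0) := by
  intro t ht
  have hfc : ContinuousOn f (Icc 0 t) := fun s hs => (hf s hs.1).continuousAt.continuousWithinAt
  have hgc : ContinuousOn g (Icc 0 t) := fun s hs => (hg s hs.1).continuousAt.continuousWithinAt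
  set K := f '' Icc 0 t ∪ g '' Icc 0 t
  obtain ⟨C, hC⟩ := hF.locallyLipschitzOn.exists_lipschitzOnWith_of_compact
    ((isCompact_Icc.image_of_continuousOn hfc).union (isCompact_Icc.image_of_continuousOn hgc))
  exact ODE_solution_unique_of_mem_Icc_right (v := fun _ => F) (s := fun _ => K)
    (fun _ _ => hC) hfc (fun s hs => (hf s hs.1).hasDerivWithinAt)
    (fun s hs => .inl (mem_image_of_mem f (Ico_subset_Icc_self hs))) hgc
    (fun s hs => (hg s hs.1).hasDerivWithinAt)
    (fun s hs => .inr (mem_image_of_mem g (Ico_subset_Icc_self hs))) h0 ⟨ht, le_rfl⟩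

section SelfAttention

variable {d n : ℕ} (β : ℝ)

theorem contDiff_SAfield {m : WithTop ℕ∞} : ContDiff ℝ m (SAfield (d := d) (n := n) β) := by
  refine contDiff_pi.2 fun i => ?_
  have hx (k : Fin n) : ContDiff ℝ m fun x : Fin n → EuclideanSpace ℝ (Fin d) => x k :=
    contDiff_apply ℝ _ k
  have he (k : Fin n) : ContDiff ℝ m fun x : Fin n → EuclideanSpace ℝ (Fin d) =>
      Real.exp (β * ⟪x i, x k⟫) :=
    Real.contDiff_exp.comp (contDiff_const.mul ((hx i).inner ℝ (hx k)))
  have hZ : ContDiff ℝ m fun x : Fin n → EuclideanSpace ℝ (Fin d) =>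
      (∑ k, Real.exp (β * ⟪x i, x k⟫))⁻¹ :=
    (ContDiff.sum fun k _ => he k).inv fun x =>
      (Finset.sum_pos (fun k _ => Real.exp_pos _) ⟨i, Finset.mem_univ i⟩).ne'
  have hv : ContDiff ℝ m fun x : Fin n → EuclideanSpace ℝ (Fin d) =>
      (∑ k, Real.exp (β * ⟪x i, x k⟫))⁻¹ • ∑ j, Real.exp (β * ⟪x i, x j⟫) • x j :=
    hZ.smul (ContDiff.sum fun j _ => (he j).smul (hx j))
  exact hv.sub (((hx i).inner ℝ hv).smul (hx i))

theorem SAfield_comp_perm (x : Fin n → EuclideanSpace ℝ (Fin d)) (σ : Equiv.Perm (Fin n))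
    (i : Fin n) : SAfield β (x ∘ σ) i = SAfield β x (σ i) := by
  simp only [SAfield, Function.comp_apply]
  rw [Equiv.sum_comp σ (fun k => Real.exp (β * ⟪x (σ i), x k⟫)),
    Equiv.sum_comp σ (fun j => Real.exp (β * ⟪x (σ i), x j⟫) • x j)]

theorem SAfield_map_linearIsometryEquiv (x : Fin n → EuclideanSpace ℝ (Fin d))
    (U : EuclideanSpace ℝ (Fin d) ≃ₗᵢ[ℝ] EuclideanSpace ℝ (Fin d)) (i : Fin n) :
    SAfield β (U ∘ x) i = U (SAfield β x i) := by
  simp only [SAfield, Function.comp_apply, LinearIsometryEquiv.inner_map_map,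
    ← LinearIsometryEquiv.map_smul, ← map_sum, ← map_sub]

def IsSASolution (β : ℝ) (x : Fin n → ℝ → EuclideanSpace ℝ (Fin d)) : Prop :=
  ∀ i, ∀ t ∈ Ici (0 : ℝ), HasDerivAt (x i) (SAfield β (fun j => x j t) i) t

variable {β} {x y : Fin n → ℝ → EuclideanSpace ℝ (Fin d)}

theorem IsSASolution.comp_perm (hx : IsSASolution β x) (σ : Equiv.Perm (Fin n)) :
    IsSASolution β (x ∘ σ) := fun i t ht => by
  rw [show (fun j => (x ∘ σ) j t) = (fun j => x j t) ∘ σ from rfl, SAfield_comp_perm]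
  exact hx (σ i) t ht

theorem IsSASolution.map_linearIsometryEquiv (hx : IsSASolution β x)
    (U : EuclideanSpace ℝ (Fin d) ≃ₗᵢ[ℝ] EuclideanSpace ℝ (Fin d)) :
    IsSASolution β fun i t => U (x i t) := fun i t ht => by
  rw [show (fun j => U (x j t)) = U ∘ fun j => x j t from rfl,
    SAfield_map_linearIsometryEquiv]
  exact U.toContinuousLinearEquiv.hasFDerivAt.comp_hasDerivAt t (hx i t ht)

theorem IsSASolution.eq_of_apply_zero_eq (hx : IsSASolution β x) (hy : IsSASolution β y)
    (h0 : ∀ i, x i 0 = y i 0) : ∀ t ∈ Ici (0 : ℝ), ∀ i, x i t = y i t := fun _ ht =>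
  congrFun <| ODE_solution_unique_Ici_of_locallyLipschitz
    (contDiff_SAfield (m := 1) β).locallyLipschitz
    (fun t ht => hasDerivAt_pi.2 fun i => hx i t ht)
    (fun t ht => hasDerivAt_pi.2 fun i => hy i t ht) (funext h0) ht

end SelfAttention

theorem stmt_13_general {d n : ℕ} (β : ℝ)
    (x : Fin n → ℝ → EuclideanSpace ℝ (Fin d))
    (hsphere : ∀ i t, x i t ∈ Metric.sphere (0 : EuclideanSpace ℝ (Fin d)) 1)
    (hode : ∀ i, ∀ t ∈ Ici (0:ℝ),
      HasDerivAt (x i) (SAfield β (fun j => x j t) i) t)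
    (horth : ∀ i j, i ≠ j → ⟪x i 0, x j 0⟫ = 0) :
    ∀ t ∈ Ici (0:ℝ), ∀ i j k l : Fin n, i ≠ j → k ≠ l →
      ⟪x i t, x j t⟫ = ⟪x k t, x l t⟫ := by
  intro t ht i j k l hij hkl
  obtain ⟨σ, hσk, hσl⟩ := MulAction.is_two_pretransitive_iff.mp
    (Equiv.Perm.isMultiplyPretransitive (Fin n) 2) hkl hij
  have hx0 : Orthonormal ℝ fun p => x p 0 :=
    ⟨fun p => mem_sphere_zero_iff_norm.mp (hsphere p 0), fun p q => horth p q⟩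
  obtain ⟨U, hU⟩ := hx0.exists_linearIsometryEquiv_apply_eq (hx0.comp σ σ.injective)
  have hx : IsSASolution β x := hode
  have hxσ := (hx.map_linearIsometryEquiv U).eq_of_apply_zero_eq (hx.comp_perm σ) hU t ht
  rw [← hσk, ← hσl, Equiv.Perm.smul_def, Equiv.Perm.smul_def]
  calc ⟪x (σ k) t, x (σ l) t⟫ = ⟪U (x k t), U (x l t)⟫ := by rw [hxσ k, hxσ l]; rfl
    _ = ⟪x k t, x l t⟫ := U.inner_map_map _ _

/-- For pairwise orthogonal initial data on `S^{d-1}` (with `d ≥ n`), under the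
self-attention dynamics the inner product `⟨x_i(t), x_j(t)⟩` is the same for all
pairs of distinct indices, at every time `t ≥ 0`. -/
theorem stmt_13 {d n : ℕ} (hn : 2 ≤ n) (hd : n ≤ d) (β : ℝ) (hβ : 0 ≤ β)
    (x : Fin n → ℝ → EuclideanSpace ℝ (Fin d))
    (hsphere : ∀ i t, x i t ∈ Metric.sphere (0 : EuclideanSpace ℝ (Fin d)) 1)
    (hode : ∀ i, ∀ t ∈ Ici (0:ℝ),
      HasDerivAt (x i) (SAfield β (fun j => x j t) i) t)
    (horth : ∀ i j, i ≠ j → ⟪x i 0, x j 0⟫ = 0) :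
    ∀ t ∈ Ici (0:ℝ), ∀ i j k l : Fin n, i ≠ j → k ≠ l →
      ⟪x i t, x j t⟫ = ⟪x k t, x l t⟫ :=
  stmt_13_general β x hsphere hode horth
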